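/- arXiv:2304.08141 — 3 statements merged into one kernel-verified Lean document; each statement's English description precedes it below -/
import Mathlib

section
/- Let S > 0 and let d : ℝ → ℝ be twice differentiable on [0, S] with d(0) = 0 and d'(0) = 1, satisfying d''(s) = −q(s) on [0, S] for a continuous q with ∫₀ˢ q(u) du ≥ 0 for every s ∈ [0, S]. Then for every s ∈ (0, S] with d(s) > 0, the magnification factor μ(s) := s² / d(s)² satisfies μ(s) ≥ 1. -/
open Set

/-- Magnification form of the modified focusing theorem (Theorem 2): under the
focusing equation `d'' = -q` with the averaged nonnegativity condition and
vertex initial conditions, the magnification factor `μ(s) = s²/d(s)²`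
satisfies `μ(s) ≥ 1` wherever `d(s) > 0`. -/
theorem magnification_ge_one
    (S : ℝ) (hS : 0 < S) (d d' d'' q : ℝ → ℝ)
    (hd : ∀ s ∈ Icc (0:ℝ) S, HasDerivWithinAt d (d' s) (Icc (0:ℝ) S) s)
    (hd' : ∀ s ∈ Icc (0:ℝ) S, HasDerivWithinAt d' (d'' s) (Icc (0:ℝ) S) s)
    (h0 : d 0 = 0) (h1 : d' 0 = 1)
    (heq : ∀ s ∈ Icc (0:ℝ) S, d'' s = - q s)
    (hq : Continuous q)
    (havg : ∀ s ∈ Icc (0:ℝ) S, 0 ≤ ∫ u in (0:ℝ)..s, q u) :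
    ∀ s ∈ Ioc (0:ℝ) S, 0 < d s → 1 ≤ s ^ 2 / (d s) ^ 2 := by
  intro s hs hpos
  have hs0 : (0:ℝ) ≤ s := hs.1.le
  have hcd' : ContinuousOn d' (Icc 0 S) := fun t ht => (hd' t ht).continuousWithinAt
  have hcd : ContinuousOn d (Icc 0 S) := fun t ht => (hd t ht).continuousWithinAt
  -- d' t = 1 - ∫₀ᵗ q for t ∈ [0,S]
  have key : ∀ t ∈ Icc (0:ℝ) S, d' t = 1 - ∫ u in (0:ℝ)..t, q u := by
    intro t ht
    have h0t : (0:ℝ) ≤ t := ht.1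
    have hftc : ∫ u in (0:ℝ)..t, -q u = d' t - d' 0 := by
      apply intervalIntegral.integral_eq_sub_of_hasDeriv_right_of_le h0t
        (hcd'.mono (Icc_subset_Icc le_rfl ht.2))
      · intro x hx
        have hxS : x ∈ Icc (0:ℝ) S := ⟨hx.1.le, hx.2.le.trans ht.2⟩
        have hmem : Icc (0:ℝ) S ∈ nhds x :=
          Icc_mem_nhds hx.1 (lt_of_lt_of_le hx.2 ht.2)
        have h := (hd' x hxS).hasDerivAt hmem
        rw [heq x hxS] at h
        exact h.hasDerivWithinAt
      · exact hq.neg.intervalIntegrable 0 t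
    rw [intervalIntegral.integral_neg] at hftc
    rw [h1] at hftc
    linarith
  -- d' ≤ 1 on [0,S]
  have hle1 : ∀ t ∈ Icc (0:ℝ) S, d' t ≤ 1 := by
    intro t ht
    have := havg t ht
    rw [key t ht]
    linarith
  -- d s ≤ s
  have hds : d s = ∫ u in (0:ℝ)..s, d' u := by
    have hftc : ∫ u in (0:ℝ)..s, d' u = d s - d 0 := by
      apply intervalIntegral.integral_eq_sub_of_hasDeriv_right_of_le hs0
        (hcd.mono (Icc_subset_Icc le_rfl hs.2))
      · intro x hx
        have hxS : x ∈ Icc (0:ℝ) S := ⟨hx.1.le, hx.2.le.trans hs.2⟩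
        have hmem : Icc (0:ℝ) S ∈ nhds x :=
          Icc_mem_nhds hx.1 (lt_of_lt_of_le hx.2 hs.2)
        exact ((hd x hxS).hasDerivAt hmem).hasDerivWithinAt
      · exact (hcd'.mono (Icc_subset_Icc le_rfl hs.2)).intervalIntegrable_of_Icc hs0
    rw [h0] at hftc
    linarith
  have hdle : d s ≤ s := by
    rw [hds]
    calc ∫ u in (0:ℝ)..s, d' u ≤ ∫ u in (0:ℝ)..s, (1:ℝ) := by
          apply intervalIntegral.integral_mono_on hs0
            ((hcd'.mono (Icc_subset_Icc le_rfl hs.2)).intervalIntegrable_of_Icc hs0)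
            (intervalIntegrable_const)
          intro x hx
          exact hle1 x ⟨hx.1, hx.2.trans hs.2⟩
      _ = s := by simp
  have hsq : (d s) ^ 2 ≤ s ^ 2 := pow_le_pow_left₀ hpos.le hdle 2
   
  rw [one_le_div (pow_pos hpos 2)]
  linarith
end

section
/- Let S > 0 and let d : ℝ → ℝ be twice differentiable on [0, S] with d(0) = 0, d'(0) = 1, and d(s) ≥ 0 for all s ∈ [0, S]. Suppose d''(s) = −(σ(s) + m(s)/2 + h(s)/2)·d(s) on [0, S], where σ, m, h : ℝ → ℝ are continuous, σ(s) ≥ 0 and m(s) ≥ 0 for all s ∈ [0, S], and the averaged condition ∫₀ˢ h(u)·d(u) du ≥ 0 holds for every s ∈ [0, S]. Then d'(s) ≤ 1 and d(s) ≤ s for every s ∈ [0, S]. -/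
open Set

/-- Theorem 2 (modified focusing theorem) in ODE form: in the modified
focusing equation `d'' = -(σ + m/2 + h/2)·d` with nonnegative shear `σ` and
matter term `m`, assuming only the beam-averaged nonnegativity
`∫₀ˢ h(u)·d(u) du ≥ 0` of the Horndeski term, and vertex initial conditions,
one has `d' ≤ 1` and `d s ≤ s` on `[0, S]`. -/
theorem focusing_theorem_averaged_horndeski
    (S : ℝ) (hS : 0 < S) (d d' d'' σ m h : ℝ → ℝ)
    (hd : ∀ s ∈ Icc (0:ℝ) S, HasDerivWithinAt d (d' s) (Icc (0:ℝ) S) s)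
    (hd' : ∀ s ∈ Icc (0:ℝ) S, HasDerivWithinAt d' (d'' s) (Icc (0:ℝ) S) s)
    (h0 : d 0 = 0) (h1 : d' 0 = 1)
    (hdpos : ∀ s ∈ Icc (0:ℝ) S, 0 ≤ d s)
    (heq : ∀ s ∈ Icc (0:ℝ) S, d'' s = -(σ s + m s / 2 + h s / 2) * d s)
    (hσc : Continuous σ) (hmc : Continuous m) (hhc : Continuous h)
    (hσ : ∀ s ∈ Icc (0:ℝ) S, 0 ≤ σ s)
    (hm : ∀ s ∈ Icc (0:ℝ) S, 0 ≤ m s)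
    (havg : ∀ s ∈ Icc (0:ℝ) S, 0 ≤ ∫ u in (0:ℝ)..s, h u * d u) :
    ∀ s ∈ Icc (0:ℝ) S, d' s ≤ 1 ∧ d s ≤ s := by
  have dc : ContinuousOn d (Icc 0 S) := fun x hx => (hd x hx).continuousWithinAt
  have d'c : ContinuousOn d' (Icc 0 S) := fun x hx => (hd' x hx).continuousWithinAt
  have d''c : ContinuousOn d'' (Icc (0:ℝ) S) := by
    have hc : ContinuousOn (fun u => -(σ u + m u / 2 + h u / 2) * d u) (Icc (0:ℝ) S) :=
      (((hσc.continuousOn.add (hmc.continuousOn.div_const 2)).add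
        (hhc.continuousOn.div_const 2)).neg.mul dc)
    exact hc.congr heq
  have hd'le : ∀ s ∈ Icc (0:ℝ) S, d' s ≤ 1 := by
    intro s hs
    obtain ⟨hs0, hsS⟩ := hs
    have hsub : Icc (0:ℝ) s ⊆ Icc 0 S := Icc_subset_Icc le_rfl hsS
    have ftc1 : ∫ u in (0:ℝ)..s, d'' u = d' s - d' 0 := by
      apply intervalIntegral.integral_eq_sub_of_hasDeriv_right_of_le hs0
        (d'c.mono hsub) (fun x hx => ?_)
        ((d''c.mono hsub).intervalIntegrable_of_Icc hs0)
      have hxS : x ∈ Ioo (0:ℝ) S := ⟨hx.1, lt_of_lt_of_le hx.2 hsS⟩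
      exact ((hd' x (Ioo_subset_Icc_self hxS)).hasDerivAt
        (Icc_mem_nhds hxS.1 hxS.2)).hasDerivWithinAt
    have I1 : IntervalIntegrable (fun u => σ u * d u) MeasureTheory.volume 0 s :=
      ((hσc.continuousOn.mul (dc.mono hsub)).intervalIntegrable_of_Icc hs0)
    have I2 : IntervalIntegrable (fun u => m u * d u / 2) MeasureTheory.volume 0 s :=
      (((hmc.continuousOn.mul (dc.mono hsub)).div_const 2).intervalIntegrable_of_Icc hs0)
    have I3 : IntervalIntegrable (fun u => h u * d u / 2) MeasureTheory.volume 0 s :=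
      (((hhc.continuousOn.mul (dc.mono hsub)).div_const 2).intervalIntegrable_of_Icc hs0)
    have e1 : ∫ u in (0:ℝ)..s, d'' u =
        ∫ u in (0:ℝ)..s, (-(σ u * d u) - m u * d u / 2 - h u * d u / 2) := by
      apply intervalIntegral.integral_congr
      intro u hu
      rw [uIcc_of_le hs0] at hu
      rw [heq u (hsub hu)]; ring
    have e2 : ∫ u in (0:ℝ)..s, (-(σ u * d u) - m u * d u / 2 - h u * d u / 2) =
        -(∫ u in (0:ℝ)..s, σ u * d u) - (∫ u in (0:ℝ)..s, m u * d u / 2)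
          - (∫ u in (0:ℝ)..s, h u * d u / 2) := by
      have I1' : IntervalIntegrable (fun u => -(σ u * d u)) MeasureTheory.volume 0 s := I1.neg
      rw [intervalIntegral.integral_sub (I1'.sub I2) I3,
        intervalIntegral.integral_sub I1' I2, intervalIntegral.integral_neg]
    have n1 : 0 ≤ ∫ u in (0:ℝ)..s, σ u * d u :=
      intervalIntegral.integral_nonneg hs0
        (fun u hu => mul_nonneg (hσ u (hsub hu)) (hdpos u (hsub hu)))
    have n2 : 0 ≤ ∫ u in (0:ℝ)..s, m u * d u / 2 :=
      intervalIntegral.integral_nonneg hs0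
        (fun u hu => div_nonneg (mul_nonneg (hm u (hsub hu)) (hdpos u (hsub hu))) (by norm_num))
    have n3 : 0 ≤ ∫ u in (0:ℝ)..s, h u * d u / 2 := by
      rw [intervalIntegral.integral_div]
      exact div_nonneg (havg s ⟨hs0, hsS⟩) (by norm_num)
    have : d' s - d' 0 ≤ 0 := by
      rw [← ftc1, e1, e2]; linarith
    linarith [this, h1.symm ▸ this]
  intro s hs
  obtain ⟨hs0, hsS⟩ := hs
  refine ⟨hd'le s ⟨hs0, hsS⟩, ?_⟩
  have hsub : Icc (0:ℝ) s ⊆ Icc 0 S := Icc_subset_Icc le_rfl hsS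
  have ftc2 : ∫ u in (0:ℝ)..s, d' u = d s - d 0 := by
    apply intervalIntegral.integral_eq_sub_of_hasDeriv_right_of_le hs0
      (dc.mono hsub) (fun x hx => ?_)
      ((d'c.mono hsub).intervalIntegrable_of_Icc hs0)
    have hxS : x ∈ Ioo (0:ℝ) S := ⟨hx.1, lt_of_lt_of_le hx.2 hsS⟩
    exact ((hd x (Ioo_subset_Icc_self hxS)).hasDerivAt
      (Icc_mem_nhds hxS.1 hxS.2)).hasDerivWithinAt
  have hmono : ∫ u in (0:ℝ)..s, d' u ≤ ∫ u in (0:ℝ)..s, (1:ℝ) := by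
    apply intervalIntegral.integral_mono_on hs0
      ((d'c.mono hsub).intervalIntegrable_of_Icc hs0)
      intervalIntegrable_const
    exact fun u hu => hd'le u (hsub hu)
  simp only [intervalIntegral.integral_const, smul_eq_mul, mul_one, sub_zero] at hmono
  rw [h0, sub_zero] at ftc2
  linarith
end

section
/- Let c > 0 and let d : ℝ → ℝ be twice differentiable on [0, π/√c] with d(0) = 0 and d'(0) = 1, satisfying d''(s) = −F(s)·d(s) on [0, π/√c] for a continuous function F with F(s) ≥ c for all s ∈ [0, π/√c]. Then there exists s* ∈ (0, π/√c] with d(s*) = 0. -/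
open Set

/-!
Compare `d` with the model solution `sin (√c s) / √c` of `y'' = -c y`, which vanishes at `π/√c`.
If `d` had no zero in `(0, π/√c]` it would be positive there, since it leaves `0` with slope `1`.
The Wronskian `d' sin (√c s) - √c d cos (√c s)` then has derivative `(c - F) d sin (√c s) ≤ 0`,
so its value `√c d (π/√c)` at the right end is at most its value `0` at the left end,
contradicting `d (π/√c) > 0`.
-/

theorem IsPreconnected.pos_of_ne_zero {X α : Type*} [TopologicalSpace X] [LinearOrder α]
    [TopologicalSpace α] [OrderClosedTopology α] [Zero α] {s : Set X} {f : X → α}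
    (hs : IsPreconnected s) (hf : ContinuousOn f s) (hne : ∀ x ∈ s, f x ≠ 0)
    {x₀ : X} (hx₀ : x₀ ∈ s) (hpos : 0 < f x₀) : ∀ x ∈ s, 0 < f x := by
  intro x hx
  by_contra! hx_nonpos
  obtain ⟨y, hy, hy_zero⟩ := hs.intermediate_value hx hx₀ hf ⟨hx_nonpos, hpos.le⟩
  exact hne y hy hy_zero

theorem exists_pos_of_hasDerivWithinAt_Icc_left {f : ℝ → ℝ} {f' a b : ℝ} (hab : a < b)
    (hf : HasDerivWithinAt f f' (Icc a b) a) (hf' : 0 < f') (hfa : f a = 0) :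
    ∃ x ∈ Ioc a b, 0 < f x := by
  have hslope : Filter.Tendsto (slope f a) (nhdsWithin a (Ioi a)) (nhds f') := by
    rw [← nhdsWithin_Ioc_eq_nhdsGT hab, ← hasDerivWithinAt_iff_tendsto_slope' (by simp)]
    exact hf.mono Ioc_subset_Icc_self
  obtain ⟨x, hx_slope, hx⟩ :=
    ((hslope.eventually (lt_mem_nhds hf')).and (Ioc_mem_nhdsGT hab)).exists
  exact ⟨x, hx, pos_of_slope_pos hx.1 hx_slope hfa⟩

section SineWronskian

open Real

variable {ω : ℝ} {d d' d'' F : ℝ → ℝ}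

noncomputable def sineWronskian (ω : ℝ) (d d' : ℝ → ℝ) (s : ℝ) : ℝ :=
  d' s * sin (ω * s) - ω * d s * cos (ω * s)

theorem hasDerivWithinAt_sineWronskian {t : Set ℝ} {s : ℝ}
    (hd : HasDerivWithinAt d (d' s) t s) (hd' : HasDerivWithinAt d' (d'' s) t s) :
    HasDerivWithinAt (sineWronskian ω d d') ((d'' s + ω ^ 2 * d s) * sin (ω * s)) t s := by
  have hlin : HasDerivAt (fun x => ω * x) ω s := by
    simpa using (hasDerivAt_id s).const_mul ω
  exact ((hd'.mul hlin.sin.hasDerivWithinAt).sub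
    ((hd.const_mul ω).mul hlin.cos.hasDerivWithinAt)).congr_deriv (by ring)

theorem sineWronskian_antitoneOn (hω : 0 < ω)
    (hd : ∀ s ∈ Icc 0 (π / ω), HasDerivWithinAt d (d' s) (Icc 0 (π / ω)) s)
    (hd' : ∀ s ∈ Icc 0 (π / ω), HasDerivWithinAt d' (d'' s) (Icc 0 (π / ω)) s)
    (heq : ∀ s ∈ Icc 0 (π / ω), d'' s = -F s * d s)
    (hF : ∀ s ∈ Icc 0 (π / ω), ω ^ 2 ≤ F s)
    (hd_nonneg : ∀ s ∈ Icc 0 (π / ω), 0 ≤ d s) :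
    AntitoneOn (sineWronskian ω d d') (Icc 0 (π / ω)) := by
  have hW := fun s hs => hasDerivWithinAt_sineWronskian (ω := ω) (hd s hs) (hd' s hs)
  refine antitoneOn_of_hasDerivWithinAt_nonpos (convex_Icc _ _)
    (fun s hs => (hW s hs).continuousWithinAt)
    (fun s hs => (hW s (interior_subset hs)).mono interior_subset) fun s hs => ?_
  rw [interior_Icc] at hs
  have hs' : s ∈ Icc 0 (π / ω) := Ioo_subset_Icc_self hs
  have hsin : 0 ≤ sin (ω * s) := by
    refine sin_nonneg_of_nonneg_of_le_pi (by nlinarith [hs.1]) ?_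
    calc ω * s ≤ ω * (π / ω) := by gcongr; exact hs.2.le
      _ = π := by field_simp
  rw [heq s hs']
  have hcoeff : -F s * d s + ω ^ 2 * d s ≤ 0 := by nlinarith [hF s hs', hd_nonneg s hs']
  exact mul_nonpos_of_nonpos_of_nonneg hcoeff hsin

theorem sturm_comparison_apply_pi_div_nonpos (hω : 0 < ω)
    (hd : ∀ s ∈ Icc 0 (π / ω), HasDerivWithinAt d (d' s) (Icc 0 (π / ω)) s)
    (hd' : ∀ s ∈ Icc 0 (π / ω), HasDerivWithinAt d' (d'' s) (Icc 0 (π / ω)) s)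
    (heq : ∀ s ∈ Icc 0 (π / ω), d'' s = -F s * d s)
    (hF : ∀ s ∈ Icc 0 (π / ω), ω ^ 2 ≤ F s)
    (hd_nonneg : ∀ s ∈ Icc 0 (π / ω), 0 ≤ d s) (h0 : d 0 = 0) :
    d (π / ω) ≤ 0 := by
  have hL : 0 ≤ π / ω := by positivity
  have hW := sineWronskian_antitoneOn hω hd hd' heq hF hd_nonneg
    (left_mem_Icc.2 hL) (right_mem_Icc.2 hL) hL
  have hωL : ω * (π / ω) = π := by field_simp
  simp only [sineWronskian, hωL, sin_pi, cos_pi, mul_zero, h0, sin_zero, zero_sub] at hW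
  nlinarith

end SineWronskian

theorem conjugate_point_exists_general
    (c : ℝ) (hc : 0 < c) (d d' d'' F : ℝ → ℝ)
    (hd : ∀ s ∈ Icc (0:ℝ) (Real.pi / Real.sqrt c),
      HasDerivWithinAt d (d' s) (Icc (0:ℝ) (Real.pi / Real.sqrt c)) s)
    (hd' : ∀ s ∈ Icc (0:ℝ) (Real.pi / Real.sqrt c),
      HasDerivWithinAt d' (d'' s) (Icc (0:ℝ) (Real.pi / Real.sqrt c)) s)
    (h0 : d 0 = 0) (h1 : d' 0 = 1)
    (heq : ∀ s ∈ Icc (0:ℝ) (Real.pi / Real.sqrt c), d'' s = -F s * d s)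
    (hF : ∀ s ∈ Icc (0:ℝ) (Real.pi / Real.sqrt c), c ≤ F s) :
    ∃ s ∈ Ioc (0:ℝ) (Real.pi / Real.sqrt c), d s = 0 := by
  by_contra! hne
  have hω : 0 < Real.sqrt c := Real.sqrt_pos.2 hc
  have hL : 0 < Real.pi / Real.sqrt c := by positivity
  have hd_pos : ∀ s ∈ Ioc 0 (Real.pi / Real.sqrt c), 0 < d s := by
    obtain ⟨s₀, hs₀, hds₀⟩ :=
      exists_pos_of_hasDerivWithinAt_Icc_left hL (h1 ▸ hd 0 (left_mem_Icc.2 hL.le)) one_pos h0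
    exact isPreconnected_Ioc.pos_of_ne_zero
      (fun s hs => (hd s (Ioc_subset_Icc_self hs)).continuousWithinAt.mono Ioc_subset_Icc_self)
      hne hs₀ hds₀
  have hd_nonneg : ∀ s ∈ Icc 0 (Real.pi / Real.sqrt c), 0 ≤ d s := by
    intro s hs
    rcases hs.1.eq_or_lt with rfl | hs_pos
    · exact h0.ge
    · exact (hd_pos s ⟨hs_pos, hs.2⟩).le
  have hend := sturm_comparison_apply_pi_div_nonpos hω hd hd' heq
    (fun s hs => (Real.sq_sqrt hc.le).trans_le (hF s hs)) hd_nonneg h0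
  exact (hd_pos _ (right_mem_Ioc.2 hL)).not_ge hend

/-- Conjugate-point existence (1D Jacobi-equation form of Hawking–Ellis
Prop. 4.4.1): if `d'' = -F·d` with `F ≥ c > 0` on `[0, π/√c]` and vertex
initial conditions `d 0 = 0`, `d' 0 = 1`, then `d` vanishes again at some
point of `(0, π/√c]`. -/
theorem conjugate_point_exists
    (c : ℝ) (hc : 0 < c) (d d' d'' F : ℝ → ℝ)
    (hd : ∀ s ∈ Icc (0:ℝ) (Real.pi / Real.sqrt c),
      HasDerivWithinAt d (d' s) (Icc (0:ℝ) (Real.pi / Real.sqrt c)) s)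
    (hd' : ∀ s ∈ Icc (0:ℝ) (Real.pi / Real.sqrt c),
      HasDerivWithinAt d' (d'' s) (Icc (0:ℝ) (Real.pi / Real.sqrt c)) s)
    (h0 : d 0 = 0) (h1 : d' 0 = 1)
    (heq : ∀ s ∈ Icc (0:ℝ) (Real.pi / Real.sqrt c), d'' s = -F s * d s)
    (hFc : Continuous F)
    (hF : ∀ s ∈ Icc (0:ℝ) (Real.pi / Real.sqrt c), c ≤ F s) :
    ∃ s ∈ Ioc (0:ℝ) (Real.pi / Real.sqrt c), d s = 0 :=
  conjugate_point_exists_general c hc d d' d'' F hd hd' h0 h1 heq hF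
end
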